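/- Let λ̃ := max_{0 ≤ m ≤ k} λ_m. Then for every s ∈ [0,1], every m with 0 ≤ m ≤ k, and every r with 1 ≤ r ≤ r_max, ‖ exp(i θ_{m r}(s) P_r) − Σ_{m'=0}^{k} p_{m'}(s) Σ_{r'=1}^{r_max} p_{r'|m'} exp(i θ_{m' r'}(s) P_{r'}) ‖ ≤ 2 (k+1) λ̃ s^{k+1}; that is, every realization of the sampled rotation deviates from the ensemble mean by at most 2(k+1)λ̃ s^{k+1} in operator norm. -/

import Mathlib

/-
Each `P_r` is Hermitian, so `t ↦ exp (t • i θ P_r)` is a path of unitaries whose derivative has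
norm `|θ| ‖P_r‖ ≤ |θ|`; by the mean value theorem every sampled rotation lies within `|θ_{m r}(s)|`
of the identity. Since `Λ ≤ 1` on `[0, 1]`, `|θ_{m r}(s)| ≤ λ̃ s^{k+1}`, so any two sampled
rotations are `2 λ̃ s^{k+1}`-close. The weights `p_{m'}(s) p_{r'|m'}` form a probability
distribution, and a closed ball is convex, so the ensemble mean is equally close to each rotation.
-/

open scoped Matrix.Norms.L2Operator
open Matrix

namespace Stmt4

variable (k : ℕ)

/-- `λ_m := Σ_r |α_{m r}|`. -/
noncomputable def lam {rmax : ℕ} (α : ℕ → Fin rmax → ℝ) (m : ℕ) : ℝ :=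
  ∑ r : Fin rmax, |α m r|

/-- `Λ(t) := Σ_{l=0}^k t^l/(k+1+l)`. -/
noncomputable def Lam (t : ℝ) : ℝ :=
  ∑ l ∈ Finset.range (k + 1), t ^ l / (k + 1 + l)

/-- `p_m(t) := t^m/((m+1+k) Λ(t))`. -/
noncomputable def pm (m : ℕ) (t : ℝ) : ℝ :=
  t ^ m / ((m + 1 + k) * Lam k t)

/-- `p_{r|m} := |α_{m r}|/λ_m`. -/
noncomputable def prm {rmax : ℕ} (α : ℕ → Fin rmax → ℝ) (m : ℕ) (r : Fin rmax) : ℝ :=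
  |α m r| / lam α m

/-- `θ_{m r}(t) := t^{k+1} sign(α_{m r}) Λ(t) λ_m`. -/
noncomputable def theta {rmax : ℕ} (α : ℕ → Fin rmax → ℝ) (m : ℕ) (r : Fin rmax)
    (t : ℝ) : ℝ :=
  t ^ (k + 1) * Real.sign (α m r) * Lam k t * lam α m

/-- The sampled rotation `exp(i θ_{m r}(t) P_r)`. -/
noncomputable def rot {n rmax : ℕ} (P : Fin rmax → Matrix (Fin n) (Fin n) ℂ)
    (α : ℕ → Fin rmax → ℝ) (m : ℕ) (r : Fin rmax) (t : ℝ) :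
    Matrix (Fin n) (Fin n) ℂ :=
  NormedSpace.exp ((Complex.I * (theta k α m r t : ℂ)) • P r)

/-- `λ̃ := max_{0 ≤ m ≤ k} λ_m`. -/
noncomputable def lamTilde {rmax : ℕ} (α : ℕ → Fin rmax → ℝ) : ℝ :=
  (Finset.range (k + 1)).sup' (Finset.nonempty_range_iff.mpr k.succ_ne_zero) (lam α)

end Stmt4

theorem norm_exp_sub_one_le_of_mem_skewAdjoint {A : Type*} [NormedRing A] [NormedAlgebra ℝ A]
    [StarRing A] [CStarRing A] [ContinuousStar A] [StarModule ℝ A] [CompleteSpace A]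
    {x : A} (hx : x ∈ skewAdjoint A) : ‖NormedSpace.exp x - 1‖ ≤ ‖x‖ := by
  let _ : NormedAlgebra ℚ A := NormedAlgebra.restrictScalars ℚ ℝ A
  have hderiv : ∀ t : ℝ, HasDerivAt (fun u : ℝ => NormedSpace.exp (u • x))
      (NormedSpace.exp (t • x) * x) t := hasDerivAt_exp_smul_const x
  have hbound : ∀ t : ℝ, ‖NormedSpace.exp (t • x) * x‖ = ‖x‖ := fun t =>
    CStarRing.norm_mem_unitary_mul x
      (NormedSpace.exp_mem_unitary_of_mem_skewAdjoint (skewAdjoint.smul_mem t hx))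
  simpa using norm_image_sub_le_of_norm_deriv_le_segment_01'
    (fun t _ => (hderiv t).hasDerivWithinAt) (fun t _ => (hbound t).le)

theorem norm_sub_sum_smul_le {E ι : Type*} [SeminormedAddCommGroup E] [NormedSpace ℝ E]
    {s : Finset ι} {w : ι → ℝ} {b : ι → E} {a : E} {C : ℝ}
    (hw : ∀ i ∈ s, 0 ≤ w i) (hw₁ : ∑ i ∈ s, w i = 1) (hb : ∀ i ∈ s, ‖a - b i‖ ≤ C) :
    ‖a - ∑ i ∈ s, w i • b i‖ ≤ C :=
  mem_closedBall_iff_norm'.mp <| (convex_closedBall a C).sum_mem hw hw₁ fun i hi =>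
    mem_closedBall_iff_norm'.mpr (hb i hi)

namespace Stmt4

variable (k : ℕ)

lemma lam_nonneg {rmax : ℕ} (α : ℕ → Fin rmax → ℝ) (m : ℕ) : 0 ≤ lam α m :=
  Finset.sum_nonneg fun _ _ => abs_nonneg _

lemma lam_le_lamTilde {rmax : ℕ} (α : ℕ → Fin rmax → ℝ) {m : ℕ} (hm : m ≤ k) :
    lam α m ≤ lamTilde k α :=
  Finset.le_sup' (lam α) (Finset.mem_range_succ_iff.mpr hm)

lemma Lam_pos {s : ℝ} (hs : 0 ≤ s) : 0 < Lam k s :=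
  Finset.sum_pos' (fun _ _ => by positivity) ⟨0, by simp, by positivity⟩

lemma Lam_le_one {s : ℝ} (hs : s ∈ Set.Icc (0:ℝ) 1) : Lam k s ≤ 1 :=
  calc Lam k s ≤ ∑ _l ∈ Finset.range (k + 1), 1 / ((k : ℝ) + 1) := by
        refine Finset.sum_le_sum fun l _ => ?_
        exact div_le_div₀ zero_le_one (pow_le_one₀ hs.1 hs.2) (by positivity)
          (le_add_of_nonneg_right l.cast_nonneg)
    _ = 1 := by
        rw [Finset.sum_const, Finset.card_range, nsmul_eq_mul]
        push_cast
        field_simp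

lemma pm_nonneg (m : ℕ) {s : ℝ} (hs : 0 ≤ s) : 0 ≤ pm k m s :=
  div_nonneg (pow_nonneg hs _) (mul_nonneg (by positivity) (Lam_pos k hs).le)

lemma sum_pm {s : ℝ} (hs : 0 ≤ s) : ∑ m ∈ Finset.range (k + 1), pm k m s = 1 := by
  have hpm : ∀ m, pm k m s = s ^ m / ((k : ℝ) + 1 + m) / Lam k s := fun m => by
    rw [pm, div_div]
    ring
  simp only [hpm, ← Finset.sum_div]
  exact div_self (Lam_pos k hs).ne'

lemma prm_nonneg {rmax : ℕ} (α : ℕ → Fin rmax → ℝ) (m : ℕ) (r : Fin rmax) : 0 ≤ prm α m r :=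
  div_nonneg (abs_nonneg _) (lam_nonneg α m)

lemma sum_prm {rmax : ℕ} (α : ℕ → Fin rmax → ℝ) {m : ℕ} (h : 0 < lam α m) :
    ∑ r, prm α m r = 1 := by
  simp only [prm, ← Finset.sum_div]
  exact div_self h.ne'

lemma abs_theta_le {rmax : ℕ} (α : ℕ → Fin rmax → ℝ) {m : ℕ} (hm : m ≤ k)
    (r : Fin rmax) {s : ℝ} (hs : s ∈ Set.Icc (0:ℝ) 1) :
    |theta k α m r s| ≤ s ^ (k + 1) * lamTilde k α := by
  have hsign : |Real.sign (α m r)| ≤ 1 := by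
    rcases Real.sign_apply_eq (α m r) with h | h | h <;> simp [h]
  have hLam := Lam_le_one k hs
  have hlam := lam_le_lamTilde k α hm
  have hpow : 0 ≤ s ^ (k + 1) := pow_nonneg hs.1 _
  have hLam₀ : 0 ≤ Lam k s := (Lam_pos k hs.1).le
  have hlam₀ := lam_nonneg α m
  rw [theta, abs_mul, abs_mul, abs_mul, abs_pow, abs_of_nonneg hs.1, abs_of_nonneg hLam₀,
    abs_of_nonneg hlam₀]
  calc s ^ (k + 1) * |Real.sign (α m r)| * Lam k s * lam α m
      = s ^ (k + 1) * (|Real.sign (α m r)| * Lam k s * lam α m) := by ring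
    _ ≤ s ^ (k + 1) * (1 * 1 * lamTilde k α) := by
        gcongr
    _ = s ^ (k + 1) * lamTilde k α := by ring

lemma norm_rot_sub_one_le {n rmax : ℕ} (P : Fin rmax → Matrix (Fin n) (Fin n) ℂ)
    (hP : ∀ r, (P r)ᴴ = P r) (hPnorm : ∀ r, ‖P r‖ ≤ 1) (α : ℕ → Fin rmax → ℝ) {m : ℕ}
    (hm : m ≤ k) (r : Fin rmax) {s : ℝ} (hs : s ∈ Set.Icc (0:ℝ) 1) :
    ‖rot k P α m r s - 1‖ ≤ s ^ (k + 1) * lamTilde k α := by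
  have hskew : (Complex.I * (theta k α m r s : ℂ)) • P r ∈ skewAdjoint _ := by
    rw [skewAdjoint.mem_iff, star_smul, star_eq_conjTranspose, hP, ← neg_smul]
    simp [Complex.conj_ofReal]
  calc ‖rot k P α m r s - 1‖ ≤ ‖(Complex.I * (theta k α m r s : ℂ)) • P r‖ :=
        norm_exp_sub_one_le_of_mem_skewAdjoint hskew
    _ = |theta k α m r s| * ‖P r‖ := by simp [norm_smul]
    _ ≤ |theta k α m r s| := mul_le_of_le_one_right (abs_nonneg _) (hPnorm r)
    _ ≤ s ^ (k + 1) * lamTilde k α := abs_theta_le k α hm r hs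

lemma norm_rot_sub_rot_le {n rmax : ℕ} (P : Fin rmax → Matrix (Fin n) (Fin n) ℂ)
    (hP : ∀ r, (P r)ᴴ = P r) (hPnorm : ∀ r, ‖P r‖ ≤ 1) (α : ℕ → Fin rmax → ℝ)
    {m m' : ℕ} (hm : m ≤ k) (hm' : m' ≤ k) (r r' : Fin rmax) {s : ℝ}
    (hs : s ∈ Set.Icc (0:ℝ) 1) :
    ‖rot k P α m r s - rot k P α m' r' s‖ ≤ 2 * (k + 1) * lamTilde k α * s ^ (k + 1) := by
  have h₁ := norm_rot_sub_one_le k P hP hPnorm α hm r hs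
  have h₂ := norm_rot_sub_one_le k P hP hPnorm α hm' r' hs
  have hlamTilde : 0 ≤ lamTilde k α := (lam_nonneg α m).trans (lam_le_lamTilde k α hm)
  calc ‖rot k P α m r s - rot k P α m' r' s‖
      ≤ ‖rot k P α m r s - 1‖ + ‖1 - rot k P α m' r' s‖ :=
        norm_sub_le_norm_sub_add_norm_sub ..
    _ ≤ 2 * lamTilde k α * s ^ (k + 1) := by rw [norm_sub_rev 1]; linarith
    _ ≤ 2 * (k + 1) * lamTilde k α * s ^ (k + 1) := by
        have := mul_nonneg (mul_nonneg k.cast_nonneg hlamTilde) (pow_nonneg hs.1 (k + 1))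
        linarith

theorem stmt4 {n rmax : ℕ}
    (P : Fin rmax → Matrix (Fin n) (Fin n) ℂ)
    (hP : ∀ r, (P r)ᴴ = P r) (hPnorm : ∀ r, ‖P r‖ = 1)
    (α : ℕ → Fin rmax → ℝ)
    (hlam : ∀ m ≤ k, 0 < lam α m) :
    ∀ s ∈ Set.Icc (0:ℝ) 1, ∀ m ≤ k, ∀ r : Fin rmax,
      ‖rot k P α m r s -
          ∑ m' ∈ Finset.range (k + 1), ∑ r' : Fin rmax,
            (pm k m' s * prm α m' r') • rot k P α m' r' s‖
        ≤ 2 * (k + 1) * lamTilde k α * s ^ (k + 1) := by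
  intro s hs m hm r
  have hmixture : ∀ m' ∈ Finset.range (k + 1),
      ∑ r', (pm k m' s * prm α m' r') • rot k P α m' r' s
        = pm k m' s • ∑ r', prm α m' r' • rot k P α m' r' s := fun m' _ => by
    simp only [Finset.smul_sum, mul_smul]
  rw [Finset.sum_congr rfl hmixture]
  refine norm_sub_sum_smul_le (fun m' _ => pm_nonneg k m' hs.1) (sum_pm k hs.1)
    fun m' hm' => ?_
  have hm'k : m' ≤ k := Finset.mem_range_succ_iff.mp hm'
  exact norm_sub_sum_smul_le (fun r' _ => prm_nonneg α m' r') (sum_prm α (hlam m' hm'k))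
    fun r' _ => norm_rot_sub_rot_le k P hP (fun r => (hPnorm r).le) α hm hm'k r r' hs

end Stmt4
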